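/- arXiv:0902.4741 — 4 statements merged into one kernel-verified Lean document; each statement's English description precedes it below -/
import Mathlib

section
/- Let a: [0,∞) → ℝ be locally integrable and y₀ ≥ 0. A function y: [0,∞) → [0,∞) is a nonnegative global solution of the Cauchy problem y' + 2a√y = 0, y(0) = y₀ (in integral form) if and only if its square root t ↦ √(y(t)) belongs to the set S(a, y₀). -/
open MeasureTheory Set Filter

/-- `a` is locally integrable on `[0,∞)`. -/
def LocIntOn (a : ℝ → ℝ) : Prop :=
  ∀ t : ℝ, 0 ≤ t → MeasureTheory.IntegrableOn a (Set.Icc 0 t) MeasureTheory.volume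

/-- `y` is a nonnegative global solution of the Cauchy problem
`y' + 2 a √y = 0`, `y 0 = y₀`, in integral form. -/
def IsSol (a : ℝ → ℝ) (y₀ : ℝ) (y : ℝ → ℝ) : Prop :=
  ContinuousOn y (Set.Ici 0) ∧ (∀ t : ℝ, 0 ≤ t → 0 ≤ y t) ∧
    ∀ t : ℝ, 0 ≤ t → y t = y₀ - 2 * ∫ s in (0:ℝ)..t, a s * Real.sqrt (y s)

/-- Membership in the set `S(a, y₀)`. -/
def MemS (a : ℝ → ℝ) (y₀ : ℝ) (w : ℝ → ℝ) : Prop :=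
  (∀ t : ℝ, 0 ≤ t → 0 ≤ w t) ∧
    ∃ g : ℝ → ℝ,
      (∀ t : ℝ, 0 ≤ t → MeasureTheory.IntegrableOn g (Set.Icc 0 t) MeasureTheory.volume) ∧
      (∀ t : ℝ, 0 ≤ t → w t = Real.sqrt y₀ + ∫ s in (0:ℝ)..t, g s) ∧
      (∀ᵐ s ∂(MeasureTheory.volume : MeasureTheory.Measure ℝ), 0 ≤ s → 0 < w s → g s = -a s)

/-- `y` is the maximal nonnegative global solution. -/
def IsMaxSol (a : ℝ → ℝ) (y₀ : ℝ) (y : ℝ → ℝ) : Prop :=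
  IsSol a y₀ y ∧ ∀ z : ℝ → ℝ, IsSol a y₀ z → ∀ t : ℝ, 0 ≤ t → z t ≤ y t

open Topology intervalIntegral

/-!
Both directions are the chain rule `G (F b) - G (F a) = ∫ G' ∘ F * F'` for an absolutely
continuous `F` and a locally Lipschitz `G`. If `w = √y ∈ S(a, y₀)`, apply it to `G x = x²`:
`y' = 2 w w' = -2 a √y`, since `w' = -a` wherever `w > 0` and the integrand vanishes where `w = 0`.
Conversely, `√` is not Lipschitz at `0`, so for a solution `y` apply it to `G x = √(x + ε)`,
getting `√(y + ε)' = -a √y / √(y + ε)`, and let `ε → 0⁺`: by dominated convergence (with bound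
`|a|`) the integrand tends to `-a` on `{y > 0}` and is `0` on `{y = 0}`.
-/

theorem continuousOn_Ici_of_forall_continuousOn_Icc {X : Type*} [TopologicalSpace X]
    {f : ℝ → X} {a : ℝ}
    (hf : ∀ b, a ≤ b → ContinuousOn f (Icc a b)) : ContinuousOn f (Ici a) := fun x hx =>
  ((hf (x + 1) (le_trans hx (by linarith))).continuousWithinAt
    ⟨hx, by linarith⟩).mono_of_mem_nhdsWithin
      (inter_mem_nhdsWithin (Ici a) (Iic_mem_nhds (by linarith)))

theorem LipschitzOnWith.comp_absolutelyContinuousOnInterval {X Y : Type*} [PseudoMetricSpace X]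
    [PseudoMetricSpace Y] {F : ℝ → X} {G : X → Y} {K : NNReal} {s : Set X} {a b : ℝ}
    (hG : LipschitzOnWith K G s) (hF : AbsolutelyContinuousOnInterval F a b)
    (hFs : MapsTo F (uIcc a b) s) : AbsolutelyContinuousOnInterval (G ∘ F) a b := by
  rw [absolutelyContinuousOnInterval_iff] at hF ⊢
  intro ε hε
  obtain ⟨δ, hδ, hFδ⟩ := hF (ε / (K + 1)) (by positivity)
  refine ⟨δ, hδ, fun E hE hEδ => ?_⟩
  calc ∑ i ∈ Finset.range E.1, dist (G (F (E.2 i).1)) (G (F (E.2 i).2))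
      ≤ ∑ i ∈ Finset.range E.1, K * dist (F (E.2 i).1) (F (E.2 i).2) :=
        Finset.sum_le_sum fun i hi => hG.dist_le_mul _ (hFs (hE.1 i hi).1) _ (hFs (hE.1 i hi).2)
    _ = K * ∑ i ∈ Finset.range E.1, dist (F (E.2 i).1) (F (E.2 i).2) := (Finset.mul_sum ..).symm
    _ ≤ K * (ε / (K + 1)) := by gcongr; exact (hFδ E hE hEδ).le
    _ < ε := by rw [mul_div_assoc', div_lt_iff₀ (by positivity)]; nlinarith

theorem AbsolutelyContinuousOnInterval.integral_comp_mul_deriv_eq_sub {F G G' : ℝ → ℝ}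
    {a b : ℝ} {s : Set ℝ} (hF : AbsolutelyContinuousOnInterval F a b)
    (hFs : MapsTo F (uIcc a b) s) (hGs : LocallyLipschitzOn s G)
    (hG : ∀ x ∈ s, HasDerivAt G (G' x) x) :
    ∫ x in a..b, G' (F x) * deriv F x = G (F b) - G (F a) := by
  obtain ⟨K, hK⟩ := (hGs.mono (image_subset_iff.2 hFs)).exists_lipschitzOnWith_of_compact
    (isCompact_uIcc.image_of_continuousOn hF.continuousOn)
  refine ((hK.comp_absolutelyContinuousOnInterval hF (mapsTo_image F _)).integral_deriv_eq_sub
    ▸ integral_congr_ae ?_)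
  filter_upwards [hF.ae_differentiableAt] with x hFx hx
  have hx' := uIoc_subset_uIcc hx
  exact ((hG _ (hFs hx')).comp x (hFx hx').hasDerivAt).deriv.symm

theorem IntervalIntegrable.integral_comp_add_primitive_mul_eq_sub {f G G' : ℝ → ℝ}
    {a b c : ℝ} {s : Set ℝ} (hf : IntervalIntegrable f volume a b)
    (hs : ∀ x ∈ uIcc a b, c + ∫ t in a..x, f t ∈ s) (hGs : LocallyLipschitzOn s G)
    (hG : ∀ x ∈ s, HasDerivAt G (G' x) x) :
    ∫ x in a..b, G' (c + ∫ t in a..x, f t) * f x = G (c + ∫ t in a..b, f t) - G c := by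
  have hF : AbsolutelyContinuousOnInterval (fun x => c + ∫ t in a..x, f t) a b :=
    (LipschitzWith.const c).lipschitzOnWith.absolutelyContinuousOnInterval.add
      (hf.absolutelyContinuousOnInterval_intervalIntegral left_mem_uIcc)
  have h := hF.integral_comp_mul_deriv_eq_sub hs hGs hG
  rw [integral_same, add_zero] at h
  rw [← h]
  refine integral_congr_ae ?_
  filter_upwards [hf.ae_hasDerivAt_integral] with x hfx hx
  rw [((hfx (uIoc_subset_uIcc hx) a left_mem_uIcc).const_add c).deriv]

theorem tendsto_sqrt_add_nhdsGT_zero (x : ℝ) :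
    Tendsto (fun ε => √(x + ε)) (𝓝[>] 0) (𝓝 √x) :=
  ((continuous_const.add continuous_id).sqrt.tendsto' 0 _ (by simp)).mono_left
    nhdsWithin_le_nhds

theorem tendsto_sqrt_div_sqrt_add_nhdsGT_zero {x : ℝ} (hx : 0 < x) :
    Tendsto (fun ε => √x / √(x + ε)) (𝓝[>] 0) (𝓝 1) := by
  have h := (tendsto_const_nhds (x := √x)).div (tendsto_sqrt_add_nhdsGT_zero x)
    (Real.sqrt_pos.2 hx).ne'
  rwa [div_self (Real.sqrt_pos.2 hx).ne'] at h

theorem sqrt_div_sqrt_add_le_one {x ε : ℝ} (hε : 0 ≤ ε) : √x / √(x + ε) ≤ 1 :=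
  div_le_one_of_le₀ (Real.sqrt_le_sqrt (by linarith)) (Real.sqrt_nonneg _)

theorem sq_eq_sub_integral_of_eq_add_integral {a g w : ℝ → ℝ} {c T : ℝ} (hT : 0 ≤ T)
    (hg : IntervalIntegrable g volume 0 T) (hw : ∀ t ∈ Icc 0 T, w t = c + ∫ s in 0..t, g s)
    (hw_nonneg : ∀ t ∈ Icc 0 T, 0 ≤ w t) (hga : ∀ᵐ s, s ∈ Ioc 0 T → 0 < w s → g s = -a s) :
    w T ^ 2 = c ^ 2 - 2 * ∫ s in 0..T, a s * w s := by
  have hchain := hg.integral_comp_add_primitive_mul_eq_sub (c := c) (G := fun x => x ^ 2)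
    (G' := fun x => 2 * x) (fun _ _ => mem_univ _)
    (contDiff_id.pow 2 : ContDiff ℝ 1 fun x : ℝ => x ^ 2).locallyLipschitz.locallyLipschitzOn
    (fun x _ => by simpa [mul_comm] using hasDerivAt_pow 2 x)
  have hsub : ∀ t ∈ uIcc 0 T, c + ∫ s in 0..t, g s = w t := fun t ht =>
    (hw t (by rwa [uIcc_of_le hT] at ht)).symm
  rw [integral_congr (g := fun s => 2 * w s * g s) fun t ht => by simp only [hsub t ht],
    hsub T right_mem_uIcc] at hchain
  have hint : ∫ s in 0..T, 2 * w s * g s = ∫ s in 0..T, -2 * (a s * w s) := by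
    refine integral_congr_ae ?_
    rw [uIoc_of_le hT]
    filter_upwards [hga] with s hs hsT
    rcases (hw_nonneg s (Ioc_subset_Icc_self hsT)).eq_or_lt with h0 | hpos
    · simp [← h0]
    · rw [hs hsT hpos]; ring
  rw [hint, intervalIntegral.integral_const_mul] at hchain
  linarith

section SquareRoot

variable {a y : ℝ → ℝ} {y₀ T : ℝ}

theorem sqrt_add_eq_sub_integral (hT : 0 ≤ T) (ha : IntegrableOn a (Icc 0 T))
    (hyc : ContinuousOn y (Icc 0 T)) (hy : ∀ t ∈ Icc 0 T, 0 ≤ y t)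
    (hsol : ∀ t ∈ Icc 0 T, y t = y₀ - 2 * ∫ s in 0..t, a s * √(y s)) {ε : ℝ} (hε : 0 < ε) :
    √(y T + ε) = √(y₀ + ε) - ∫ s in 0..T, a s * (√(y s) / √(y s + ε)) := by
  set f : ℝ → ℝ := fun s => -2 * (a s * √(y s))
  have hf : IntervalIntegrable f volume 0 T :=
    ((intervalIntegrable_iff_integrableOn_Icc_of_le hT).2
      (ha.mul_continuousOn hyc.sqrt isCompact_Icc)).const_mul (-2)
  have hsub : ∀ t ∈ uIcc 0 T, y₀ + ∫ s in 0..t, f s = y t := by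
    intro t ht
    rw [uIcc_of_le hT] at ht
    rw [hsol t ht, intervalIntegral.integral_const_mul]
    ring
  have hchain := hf.integral_comp_add_primitive_mul_eq_sub (c := y₀) (s := Ioi (-ε))
    (G := fun x => √(x + ε)) (G' := fun x => 1 / (2 * √(x + ε)))
    (fun t ht => by rw [hsub t ht, mem_Ioi]; linarith [hy t (by rwa [uIcc_of_le hT] at ht)])
    (ContDiffOn.locallyLipschitzOn (convex_Ioi _)
      ((contDiffOn_id.add contDiffOn_const).sqrt fun x hx => by
        rw [mem_Ioi] at hx; simp only [id]; linarith))
    (fun x hx => ((hasDerivAt_id x).add_const ε).sqrt (by rw [mem_Ioi] at hx; simp; linarith))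
  rw [integral_congr (g := fun s => -(a s * (√(y s) / √(y s + ε)))) fun t ht => ?_,
    hsub T right_mem_uIcc, intervalIntegral.integral_neg] at hchain
  · linarith
  · have hpos : 0 < √(y t + ε) :=
      Real.sqrt_pos.2 (by linarith [hy t (by rwa [uIcc_of_le hT] at ht)])
    simp only [hsub t ht, f]
    field_simp

theorem tendsto_integral_mul_sqrt_div_sqrt_add (hT : 0 ≤ T) (ha : IntervalIntegrable a volume 0 T)
    (hyc : ContinuousOn y (Icc 0 T)) (hy : ∀ t ∈ Icc 0 T, 0 ≤ y t) :
    Tendsto (fun ε => ∫ s in 0..T, a s * (√(y s) / √(y s + ε))) (𝓝[>] 0)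
      (𝓝 (∫ s in 0..T, {s | 0 < y s}.indicator a s)) := by
  have hy_meas : AEMeasurable y (volume.restrict (uIoc 0 T)) := by
    rw [uIoc_of_le hT]
    exact (hyc.mono Ioc_subset_Icc_self).aemeasurable measurableSet_Ioc
  have ha_meas : AEMeasurable a (volume.restrict (uIoc 0 T)) := ha.def'.aemeasurable
  refine tendsto_integral_filter_of_dominated_convergence (fun s => |a s|)
    (Eventually.of_forall fun ε => (by fun_prop : AEMeasurable _ _).aestronglyMeasurable)
    ?_ ha.abs ?_
  · filter_upwards [self_mem_nhdsWithin] with ε hε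
    refine Eventually.of_forall fun s _ => ?_
    rw [Real.norm_eq_abs, abs_mul,
      abs_of_nonneg (div_nonneg (Real.sqrt_nonneg _) (Real.sqrt_nonneg _))]
    exact mul_le_of_le_one_right (abs_nonneg _) (sqrt_div_sqrt_add_le_one hε.le)
  · refine Eventually.of_forall fun s hs => ?_
    rw [uIoc_of_le hT] at hs
    rcases (hy s (Ioc_subset_Icc_self hs)).eq_or_lt with h0 | hpos
    · simp [← h0]
    · simpa [indicator_of_mem (show s ∈ {s | 0 < y s} from hpos)] using
        (tendsto_sqrt_div_sqrt_add_nhdsGT_zero hpos).const_mul (a s)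

theorem sqrt_eq_sub_integral_indicator (hT : 0 ≤ T) (ha : IntegrableOn a (Icc 0 T))
    (hyc : ContinuousOn y (Icc 0 T)) (hy : ∀ t ∈ Icc 0 T, 0 ≤ y t)
    (hsol : ∀ t ∈ Icc 0 T, y t = y₀ - 2 * ∫ s in 0..t, a s * √(y s)) :
    √(y T) = √y₀ - ∫ s in 0..T, {s | 0 < y s}.indicator a s := by
  refine tendsto_nhds_unique (tendsto_sqrt_add_nhdsGT_zero (y T)) ?_
  refine ((tendsto_sqrt_add_nhdsGT_zero y₀).sub (tendsto_integral_mul_sqrt_div_sqrt_add hT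
    ((intervalIntegrable_iff_integrableOn_Icc_of_le hT).2 ha) hyc hy)).congr' ?_
  filter_upwards [self_mem_nhdsWithin] with ε hε
  exact (sqrt_add_eq_sub_integral hT ha hyc hy hsol hε).symm

end SquareRoot

theorem stmt0 (a : ℝ → ℝ) (y₀ : ℝ) (ha : LocIntOn a) (hy₀ : 0 ≤ y₀)
    (y : ℝ → ℝ) (hy : ∀ t : ℝ, 0 ≤ t → 0 ≤ y t) :
    IsSol a y₀ y ↔ MemS a y₀ (fun t => Real.sqrt (y t)) := by
  constructor
  · rintro ⟨hyc, -, hsol⟩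
    refine ⟨fun t _ => Real.sqrt_nonneg _, {s | 0 < y s}.indicator (-a), fun t ht => ?_,
      fun t ht => ?_, Eventually.of_forall fun s _ hs => ?_⟩
    · exact (ha t ht).neg.indicator₀ (nullMeasurableSet_lt aemeasurable_const
        ((hyc.mono Icc_subset_Ici_self).aemeasurable measurableSet_Icc))
    · simp only [indicator_neg', Pi.neg_apply, intervalIntegral.integral_neg, ← sub_eq_add_neg]
      exact sqrt_eq_sub_integral_indicator ht (ha t ht) (hyc.mono Icc_subset_Ici_self)
        (fun s hs => hy s hs.1) (fun s hs => hsol s hs.1)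
    · exact indicator_of_mem (show s ∈ {s | 0 < y s} from Real.sqrt_pos.1 hs) _
  · rintro ⟨-, g, hg, hw, hga⟩
    have hy_sq : ∀ t, 0 ≤ t → y t = (√y₀ + ∫ s in 0..t, g s) ^ 2 := fun t ht => by
      rw [← hw t ht, Real.sq_sqrt (hy t ht)]
    refine ⟨continuousOn_Ici_of_forall_continuousOn_Icc fun T hT => ?_, hy, fun t ht => ?_⟩
    · refine ((continuousOn_const.add ?_).pow 2).congr fun t ht => hy_sq t ht.1
      have hgT := hg T hT
      rw [← uIcc_of_le hT] at hgT ⊢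
      exact continuousOn_primitive_interval hgT
    · have h := sq_eq_sub_integral_of_eq_add_integral (a := a) (w := fun t => √(y t))
        (c := √y₀) ht ((intervalIntegrable_iff_integrableOn_Icc_of_le ht).2 (hg t ht))
        (fun s hs => hw s hs.1) (fun s _ => Real.sqrt_nonneg _)
        (hga.mono fun s hs hsT => hs hsT.1.le)
      rwa [Real.sq_sqrt (hy t ht), Real.sq_sqrt hy₀] at h
end

section
/- Let a: [0,∞) → ℝ be locally integrable, y₀ ≥ 0, and let y be the maximal solution of the Cauchy problem y' + 2a√y = 0, y(0) = y₀. Then a(t) ≥ 0 for almost every t ≥ 0 with y(t) = 0; equivalently, setting a*(s) := a(s) if y(s) > 0 and a*(s) := 0 otherwise, one has a*(t) ≤ a(t) for almost every t ≥ 0. -/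
/-!
If `y` vanishes at `t₀`, one may restart from `t₀` with `z = (max (G, 0))²`, where
`G t = -∫_{t₀}^t a`: since `G` is absolutely continuous, the chain rule gives
`z' = 2 max (G, 0) G' = -2 a √z` almost everywhere. Maximality of `y` then forces `z t₁ = 0` at
every later zero `t₁` of `y`, i.e. `∫_{t₀}^{t₁} a ≥ 0`: the primitive of `a` is nondecreasing
on the zero set of `y`. At almost every zero `t` this primitive has derivative `a t`, and `t` is
a limit of zeros `t₁ ↓ t` (only countably many zeros are isolated on the right), so `a t` is a
limit of nonnegative difference quotients.
-/

open MeasureTheory Set Filter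

open scoped Topology

theorem MeasureTheory.LocallyIntegrable.intervalIntegrable {f : ℝ → ℝ}
    (hf : LocallyIntegrable f volume) (c d : ℝ) : IntervalIntegrable f volume c d :=
  intervalIntegrable_iff.mpr <| (hf.integrableOn_isCompact isCompact_uIcc).mono_set uIoc_subset_uIcc

theorem hasDerivAt_sq_max_zero (u : ℝ) :
    HasDerivAt (fun v : ℝ => max v 0 ^ 2) (2 * max u 0) u := by
  rcases lt_trichotomy u 0 with hu | rfl | hu
  · rw [max_eq_right hu.le, mul_zero]
    refine (hasDerivAt_const u (0 : ℝ)).congr_of_eventuallyEq ?_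
    filter_upwards [Iio_mem_nhds hu] with v hv
    simp [max_eq_right hv.out.le]
  · have hsq : HasDerivAt (fun v : ℝ => v ^ 2) 0 0 := by simpa using hasDerivAt_pow 2 (0 : ℝ)
    have hright : HasDerivWithinAt (fun v : ℝ => max v 0 ^ 2) 0 (Ici 0) 0 :=
      hsq.hasDerivWithinAt.congr (fun v hv => by rw [max_eq_left hv.out]) (by simp)
    have hleft : HasDerivWithinAt (fun v : ℝ => max v 0 ^ 2) 0 (Iic 0) 0 :=
      (hasDerivWithinAt_const 0 _ (0 : ℝ)).congr (fun v hv => by simp [max_eq_right hv.out])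
        (by simp)
    simpa [Iic_union_Ici] using hleft.union hright
  · rw [max_eq_left hu.le]
    refine ((hasDerivAt_pow 2 u).congr_of_eventuallyEq ?_).congr_deriv (by ring)
    filter_upwards [Ioi_mem_nhds hu] with v hv
    simp [max_eq_left hv.out.le]

theorem LipschitzWith.comp_absolutelyContinuousOnInterval {φ : ℝ → ℝ} {K : NNReal}
    (hφ : LipschitzWith K φ) {f : ℝ → ℝ} {a b : ℝ} (hf : AbsolutelyContinuousOnInterval f a b) :
    AbsolutelyContinuousOnInterval (φ ∘ f) a b := by
  unfold AbsolutelyContinuousOnInterval at hf ⊢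
  exact squeeze_zero (fun _ => Finset.sum_nonneg fun _ _ => dist_nonneg)
    (fun E => (Finset.sum_le_sum fun i _ => hφ.dist_le_mul _ _).trans_eq
      (Finset.mul_sum _ _ _).symm) (by simpa using hf.const_mul (K : ℝ))

theorem sq_max_integral_eq {g : ℝ → ℝ} {t₀ T : ℝ} (hg : IntervalIntegrable g volume t₀ T) :
    max (∫ u in t₀..T, g u) 0 ^ 2 = 2 * ∫ s in t₀..T, max (∫ u in t₀..s, g u) 0 * g s := by
  set G : ℝ → ℝ := fun t => ∫ u in t₀..t, g u
  have hG : AbsolutelyContinuousOnInterval G t₀ T :=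
    hg.absolutelyContinuousOnInterval_intervalIntegral left_mem_uIcc
  have hGplus : AbsolutelyContinuousOnInterval (fun t => max (G t) 0) t₀ T :=
    (LipschitzWith.id.max_const 0).comp_absolutelyContinuousOnInterval hG
  have hderiv : ∀ᵐ s, s ∈ uIoc t₀ T →
      deriv (fun t => max (G t) 0 ^ 2) s = 2 * max (G s) 0 * g s := by
    filter_upwards [hg.ae_hasDerivAt_integral] with s hs hsI
    exact ((hasDerivAt_sq_max_zero (G s)).comp s
      (hs (uIoc_subset_uIcc hsI) t₀ left_mem_uIcc)).deriv
  have hFTC := (hGplus.fun_mul hGplus).integral_deriv_eq_sub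
  simp only [← pow_two] at hFTC
  rw [intervalIntegral.integral_congr_ae hderiv] at hFTC
  simpa [G, mul_assoc, intervalIntegral.integral_const_mul] using hFTC.symm

theorem LocIntOn.locallyIntegrable_indicator {a : ℝ → ℝ} (ha : LocIntOn a) :
    LocallyIntegrable ((Ici 0).indicator a) volume := by
  have hIcc : ∀ c d : ℝ, IntegrableOn ((Ici 0).indicator a) (Icc c d) volume := fun c d => by
    rw [IntegrableOn, integrable_indicator_iff measurableSet_Ici, IntegrableOn,
      Measure.restrict_restrict measurableSet_Ici]
    exact (ha _ (le_max_right d 0)).mono_set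
      fun x hx => ⟨hx.1, hx.2.2.trans (le_max_left _ _)⟩
  exact locallyIntegrable_iff.mpr fun K hK => (hIcc _ _).mono_set hK.isBounded.subset_Icc_sInf_sSup

section

variable {a : ℝ → ℝ} {y₀ : ℝ} {y : ℝ → ℝ}

theorem isSol_indicator_Ici_iff : IsSol ((Ici 0).indicator a) y₀ y ↔ IsSol a y₀ y := by
  have hint : ∀ t, 0 ≤ t → ∫ s in (0:ℝ)..t, (Ici 0).indicator a s * √(y s) =
      ∫ s in (0:ℝ)..t, a s * √(y s) := fun t ht =>
    intervalIntegral.integral_congr fun s hs => by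
      rw [uIcc_of_le ht] at hs
      simp [indicator_of_mem (mem_Ici.mpr hs.1)]
  refine and_congr_right' (and_congr_right' (forall₂_congr fun t ht => ?_))
  rw [hint t ht]

theorem isMaxSol_indicator_Ici_iff : IsMaxSol ((Ici 0).indicator a) y₀ y ↔ IsMaxSol a y₀ y := by
  simp only [IsMaxSol, isSol_indicator_Ici_iff]

theorem IsSol.exists_continuation (ha : LocallyIntegrable a volume) (hy : IsSol a y₀ y)
    {t₀ : ℝ} (ht₀ : 0 ≤ t₀) (hyt₀ : y t₀ = 0) {w : ℝ → ℝ} (hw_cont : ContinuousOn w (Ici t₀))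
    (hw_nonneg : ∀ t, t₀ ≤ t → 0 ≤ w t)
    (hw : ∀ t, t₀ ≤ t → w t = -2 * ∫ s in t₀..t, a s * √(w s)) :
    ∃ z, IsSol a y₀ z ∧ ∀ t, t₀ ≤ t → z t = w t := by
  obtain ⟨hy_cont, hy_nonneg, hy_eq⟩ := hy
  have hwt₀ : w t₀ = 0 := by simpa using hw t₀ le_rfl
  set z : ℝ → ℝ := fun t => if t < t₀ then y t else w t
  have hzy : ∀ t, t ≤ t₀ → z t = y t := fun t ht => by
    rcases ht.lt_or_eq with ht | rfl
    · exact if_pos ht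
    · simp [z, hyt₀, hwt₀]
  have hzw : ∀ t, t₀ ≤ t → z t = w t := fun t ht => if_neg (not_lt.mpr ht)
  have hz_cont : ContinuousOn z (Ici 0) := by
    refine ContinuousOn.if (fun t ht => ?_) (hy_cont.mono inter_subset_left)
      (hw_cont.mono (inter_subset_right.trans
        (closure_minimal (fun t ht => not_lt.mp ht) isClosed_Ici)))
    have ht₀' : t = t₀ := by simpa [Iio_def, frontier_Iio] using ht.2
    rw [ht₀', hyt₀, hwt₀]
  have hint : ∀ p q, 0 ≤ p → 0 ≤ q → IntervalIntegrable (fun s => a s * √(z s)) volume p q :=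
    fun p q hp hq => (ha.intervalIntegrable p q).mul_continuousOn
      (Real.continuous_sqrt.comp_continuousOn (hz_cont.mono fun s hs => le_min hp hq |>.trans hs.1))
  have hy_part : ∀ t, t ≤ t₀ →
      ∫ s in (0:ℝ)..t, a s * √(z s) = ∫ s in (0:ℝ)..t, a s * √(y s) := fun t ht =>
    intervalIntegral.integral_congr fun s hs => by rw [hzy s (hs.2.trans (max_le ht₀ ht))]
  have hw_part : ∀ t, t₀ ≤ t →
      ∫ s in t₀..t, a s * √(z s) = ∫ s in t₀..t, a s * √(w s) := fun t ht =>
    intervalIntegral.integral_congr fun s hs => by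
      rw [hzw s (le_min le_rfl ht |>.trans hs.1)]
  refine ⟨z, ⟨hz_cont, fun t ht => ?_, fun t ht => ?_⟩, hzw⟩
  · rcases le_total t t₀ with htt | htt
    · rw [hzy t htt]; exact hy_nonneg t ht
    · rw [hzw t htt]; exact hw_nonneg t htt
  · rcases le_total t t₀ with htt | htt
    · rw [hzy t htt, hy_part t htt]; exact hy_eq t ht
    · have hy_t₀ := hy_eq t₀ ht₀
      rw [hyt₀] at hy_t₀
      rw [← intervalIntegral.integral_add_adjacent_intervals (hint 0 t₀ le_rfl ht₀)
        (hint t₀ t ht₀ ht), hzw t htt, hy_part t₀ le_rfl, hw_part t htt, hw t htt]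
      linarith

theorem IsMaxSol.integral_nonneg_of_eq_zero (ha : LocallyIntegrable a volume)
    (hy : IsMaxSol a y₀ y) {t₀ t₁ : ℝ} (ht₀ : 0 ≤ t₀) (ht₀₁ : t₀ ≤ t₁) (hyt₀ : y t₀ = 0)
    (hyt₁ : y t₁ = 0) : 0 ≤ ∫ s in t₀..t₁, a s := by
  set G : ℝ → ℝ := fun t => ∫ s in t₀..t, -a s
  have hG : Continuous G :=
    intervalIntegral.continuous_primitive (fun p q => (ha.intervalIntegrable p q).neg) t₀
  have hw : ∀ t, t₀ ≤ t →
      max (G t) 0 ^ 2 = -2 * ∫ s in t₀..t, a s * √(max (G s) 0 ^ 2) := fun t _ => by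
    have key : max (G t) 0 ^ 2 = 2 * ∫ s in t₀..t, max (G s) 0 * -a s :=
      sq_max_integral_eq (ha.intervalIntegrable t₀ t).neg
    simp only [Real.sqrt_sq (le_max_right _ _)]
    rw [key, ← intervalIntegral.integral_const_mul, ← intervalIntegral.integral_const_mul]
    congr 1 with s
    ring
  obtain ⟨z, hz, hzw⟩ := hy.1.exists_continuation (w := fun t => max (G t) 0 ^ 2) ha ht₀ hyt₀
    ((hG.max continuous_const).pow 2).continuousOn (fun t _ => sq_nonneg _) hw
  have hGt₁ := hy.2 z hz t₁ (ht₀.trans ht₀₁)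
  rw [hzw t₁ ht₀₁, hyt₁] at hGt₁
  have : G t₁ ≤ 0 := (le_max_left _ _).trans (pow_eq_zero_iff two_ne_zero |>.1
    (le_antisymm hGt₁ (sq_nonneg _))).le
  simpa [G, intervalIntegral.integral_neg] using this

theorem IsMaxSol.ae_nonneg_of_eq_zero (ha : LocallyIntegrable a volume) (hy : IsMaxSol a y₀ y) :
    ∀ᵐ t, 0 ≤ t → y t = 0 → 0 ≤ a t := by
  set Z := {t | 0 ≤ t ∧ y t = 0}
  have hacc : ∀ᵐ t, t ∈ Z → 𝓝[Z ∩ Ioi t] t ≠ ⊥ := by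
    filter_upwards [(countable_setOfPred_isolated_right_within (s := Z)).ae_notMem volume]
      with t ht htZ using fun h => ht ⟨htZ, h⟩
  filter_upwards [LocallyIntegrable.ae_hasDerivAt_integral ha, hacc] with t hderiv hacc ht hyt
  have := neBot_iff.2 (hacc ⟨ht, hyt⟩)
  have hslope := (hasDerivWithinAt_iff_tendsto_slope' fun h => lt_irrefl t h.2).1
    ((hderiv t).hasDerivWithinAt (s := Z ∩ Ioi t))
  refine ge_of_tendsto hslope (eventually_nhdsWithin_of_forall fun s ⟨⟨_, hys⟩, hts⟩ => ?_)
  rw [slope_def_field, intervalIntegral.integral_same, sub_zero]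
  exact div_nonneg (hy.integral_nonneg_of_eq_zero ha ht hts.out.le hyt hys)
    (sub_nonneg.2 hts.out.le)

end

theorem stmt3_general (a : ℝ → ℝ) (y₀ : ℝ) (ha : LocIntOn a)
    (y : ℝ → ℝ) (hy : IsMaxSol a y₀ y) :
    (∀ᵐ t ∂(MeasureTheory.volume : MeasureTheory.Measure ℝ), 0 ≤ t → y t = 0 → 0 ≤ a t) ∧
    (∀ᵐ t ∂(MeasureTheory.volume : MeasureTheory.Measure ℝ), 0 ≤ t →
      (if 0 < y t then a t else 0) ≤ a t) := by
  have hzero : ∀ᵐ t, 0 ≤ t → y t = 0 → 0 ≤ a t := by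
    filter_upwards [(isMaxSol_indicator_Ici_iff.2 hy).ae_nonneg_of_eq_zero
      ha.locallyIntegrable_indicator] with t h ht hyt
    simpa [indicator_of_mem (mem_Ici.2 ht)] using h ht hyt
  refine ⟨hzero, ?_⟩
  filter_upwards [hzero] with t h ht
  split_ifs with hyt
  · exact le_rfl
  · exact h ht (le_antisymm (not_lt.1 hyt) (hy.1.2.1 t ht))

theorem stmt3 (a : ℝ → ℝ) (y₀ : ℝ) (ha : LocIntOn a) (hy₀ : 0 ≤ y₀)
    (y : ℝ → ℝ) (hy : IsMaxSol a y₀ y) :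
    (∀ᵐ t ∂(MeasureTheory.volume : MeasureTheory.Measure ℝ), 0 ≤ t → y t = 0 → 0 ≤ a t) ∧
    (∀ᵐ t ∂(MeasureTheory.volume : MeasureTheory.Measure ℝ), 0 ≤ t →
      (if 0 < y t then a t else 0) ≤ a t) :=
  stmt3_general a y₀ ha y hy
end

section
/- Let a: [0,∞) → ℝ be locally integrable and y₀ ≥ 0. Then every w ∈ S(a, y₀) satisfies w(t) ≤ √y₀ + ∫₀ᵗ a⁻(s) ds for every t ≥ 0, where a⁻(s) := max(−a(s), 0) denotes the negative part of a. -/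
open MeasureTheory Set Filter

/-!
Let `τ` be the last zero of `w` in `[0, t]` (or `τ = 0` if there is none), so that `w τ ≤ √y₀`.
On `(τ, t]` the function `w` is positive, hence its derivative is `-a ≤ a⁻` there, and
`w t = w τ + ∫_τ^t (-a) ≤ √y₀ + ∫_0^t a⁻`.
-/

theorem exists_last_zero_or_left_of_continuousOn {f : ℝ → ℝ} {b c : ℝ} (hbc : b ≤ c)
    (hf : ContinuousOn f (Icc b c)) :
    ∃ τ ∈ Icc b c, (τ = b ∨ f τ = 0) ∧ ∀ s ∈ Ioc τ c, f s ≠ 0 := by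
  by_cases hzero : ∃ s ∈ Icc b c, f s = 0
  · obtain ⟨s, hs, hfs⟩ := hzero
    have hcompact : IsCompact (Icc b c ∩ f ⁻¹' {0}) :=
      isCompact_Icc.of_isClosed_subset
        (hf.preimage_isClosed_of_isClosed isClosed_Icc isClosed_singleton) inter_subset_left
    obtain ⟨τ, ⟨hτ, hfτ⟩, hτ_max⟩ := hcompact.exists_isGreatest ⟨s, hs, hfs⟩
    refine ⟨τ, hτ, .inr hfτ, fun s hs hfs => ?_⟩
    exact (hτ_max ⟨⟨hτ.1.trans hs.1.le, hs.2⟩, hfs⟩).not_gt hs.1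
  · push Not at hzero
    exact ⟨b, left_mem_Icc.2 hbc, .inl rfl, fun s hs => hzero s (Ioc_subset_Icc_self hs)⟩

theorem intervalIntegral_neg_le_intervalIntegral_negPart {a : ℝ → ℝ} {b τ c : ℝ}
    (hbτ : b ≤ τ) (hτc : τ ≤ c) (ha : IntegrableOn a (Icc b c)) :
    ∫ s in τ..c, -a s ≤ ∫ s in b..c, max (-a s) 0 := by
  have hnegPart : IntervalIntegrable (fun s => max (-a s) 0) volume b c :=
    IntegrableOn.intervalIntegrable (by rw [uIcc_of_le (hbτ.trans hτc)]; exact ha.neg.pos_part)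
  calc ∫ s in τ..c, -a s ≤ ∫ s in τ..c, max (-a s) 0 :=
        intervalIntegral.integral_mono_on hτc
          (IntegrableOn.intervalIntegrable (ha.neg.mono_set (by
            rw [uIcc_of_le hτc]; exact Icc_subset_Icc_left hbτ)))
          (hnegPart.mono_set (by
            rw [uIcc_of_le hτc, uIcc_of_le (hbτ.trans hτc)]; exact Icc_subset_Icc_left hbτ))
          fun s _ => le_max_left _ _
    _ ≤ ∫ s in b..c, max (-a s) 0 :=
        intervalIntegral.integral_mono_interval hbτ hτc le_rfl
          (Eventually.of_forall fun s => le_max_right _ _) hnegPart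

theorem MemS.continuousOn_Icc {a : ℝ → ℝ} {y₀ : ℝ} {w : ℝ → ℝ} (hw : MemS a y₀ w)
    {t : ℝ} (ht : 0 ≤ t) : ContinuousOn w (Icc 0 t) := by
  obtain ⟨-, g, hg, hw_eq, -⟩ := hw
  have hprimitive := intervalIntegral.continuousOn_primitive_interval (μ := volume)
    (a := 0) (b := t) (f := g) (by rw [uIcc_of_le ht]; exact hg t ht)
  rw [uIcc_of_le ht] at hprimitive
  exact (continuousOn_const.add hprimitive).congr fun s hs => hw_eq s hs.1

theorem stmt9_general (a : ℝ → ℝ) (y₀ : ℝ) (ha : LocIntOn a)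
    (w : ℝ → ℝ) (hw : MemS a y₀ w) :
    ∀ t : ℝ, 0 ≤ t → w t ≤ Real.sqrt y₀ + ∫ s in (0:ℝ)..t, max (-a s) 0 := by
  intro t ht
  obtain ⟨τ, hτ, hτ_start, hτ_last⟩ :=
    exists_last_zero_or_left_of_continuousOn ht (hw.continuousOn_Icc ht)
  obtain ⟨hw_nonneg, g, hg, hw_eq, hg_eq⟩ := hw
  have hwτ : w τ ≤ Real.sqrt y₀ := by
    rcases hτ_start with rfl | hwτ
    · simp [hw_eq 0 le_rfl]
    · exact hwτ ▸ Real.sqrt_nonneg y₀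
  have hg_int : ∀ u ∈ Icc 0 t, IntervalIntegrable g volume 0 u := fun u hu =>
    IntegrableOn.intervalIntegrable (by
      rw [uIcc_of_le hu.1]; exact (hg t ht).mono_set (Icc_subset_Icc_right hu.2))
  have hw_split : w t = w τ + ∫ s in τ..t, g s := by
    rw [hw_eq t ht, hw_eq τ hτ.1, ← intervalIntegral.integral_interval_sub_left
      (hg_int t (right_mem_Icc.2 ht)) (hg_int τ hτ)]
    ring
  have hg_neg : ∫ s in τ..t, g s = ∫ s in τ..t, -a s := by
    refine intervalIntegral.integral_congr_ae ?_
    filter_upwards [hg_eq] with s hs hs_mem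
    rw [uIoc_of_le hτ.2] at hs_mem
    exact hs (hτ.1.trans hs_mem.1.le)
      ((hw_nonneg s (hτ.1.trans hs_mem.1.le)).lt_of_ne' (hτ_last s hs_mem))
  calc w t = w τ + ∫ s in τ..t, -a s := by rw [hw_split, hg_neg]
    _ ≤ Real.sqrt y₀ + ∫ s in (0:ℝ)..t, max (-a s) 0 :=
      add_le_add hwτ (intervalIntegral_neg_le_intervalIntegral_negPart hτ.1 hτ.2 (ha t ht))

theorem stmt9 (a : ℝ → ℝ) (y₀ : ℝ) (ha : LocIntOn a) (hy₀ : 0 ≤ y₀)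
    (w : ℝ → ℝ) (hw : MemS a y₀ w) :
    ∀ t : ℝ, 0 ≤ t → w t ≤ Real.sqrt y₀ + ∫ s in (0:ℝ)..t, max (-a s) 0 :=
  stmt9_general a y₀ ha w hw
end

section
/- Let a: [0,∞) → ℝ be locally integrable, let y₀ > 0, and suppose a(t) ≤ K for almost every t ≥ 0, where K > 0. Then the maximal solution y of the Cauchy problem y' + 2a√y = 0, y(0) = y₀ satisfies y(t) > 0 and √(y(t)) = √y₀ − ∫₀ᵗ a(s) ds for every t ∈ [0, √y₀/K). -/
/-!
Put `r t = √y₀ - ∫₀ᵗ a`. Since `r` is absolutely continuous with `r' = -a`, `r²` satisfies the same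
integral equation as `y` with `√y` replaced by `r`, so `y - r² = -2 ∫₀ᵗ a (√y - r)`. As long as `r`
stays positive, dividing `y - r² = (√y - r)(√y + r)` by `√y + r ≥ min r > 0` gives a Gronwall
inequality `|√y - r| (t) ≤ C ∫₀ᵗ |a| |√y - r|`, hence `√y = r`. The bound `a ≤ K` keeps
`r t ≥ √y₀ - K t > 0` for `t < √y₀ / K`.
-/

open MeasureTheory Set Filter Topology

theorem sq_sub_integral {f : ℝ → ℝ} {c d : ℝ} (hf : IntervalIntegrable f volume c d) (x : ℝ) :
    (x - ∫ s in c..d, f s) ^ 2 = x ^ 2 - 2 * ∫ s in c..d, f s * (x - ∫ u in c..s, f u) := by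
  set r : ℝ → ℝ := fun s => x - ∫ u in c..s, f u
  have hr : AbsolutelyContinuousOnInterval r c d :=
    (LipschitzWith.const x).lipschitzOnWith.absolutelyContinuousOnInterval.sub
      (hf.absolutelyContinuousOnInterval_intervalIntegral left_mem_uIcc)
  have hderiv : ∀ᵐ s, s ∈ uIoc c d → deriv r s = -f s := by
    filter_upwards [hf.ae_hasDerivAt_integral] with s hs hsI
    exact ((hasDerivAt_const s x).sub (hs (uIoc_subset_uIcc hsI) c left_mem_uIcc)).deriv.trans
      (zero_sub _)
  have h := hr.integral_deriv_mul_eq_sub hr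
  rw [intervalIntegral.integral_congr_ae (g := fun s => -2 * (f s * r s))
    (by filter_upwards [hderiv] with s hs hsI; rw [hs hsI]; ring),
    intervalIntegral.integral_const_mul] at h
  simp only [r, intervalIntegral.integral_same, sub_zero] at h
  linear_combination -h

theorem IntervalIntegrable.eventually_integral_lt {g : ℝ → ℝ} {x b ε : ℝ}
    (hg : IntervalIntegrable g volume x b) (hxb : x < b) (hε : 0 < ε) :
    ∀ᶠ t in 𝓝[>] x, ∫ u in x..t, g u < ε := by
  have hcont := (intervalIntegral.continuousOn_primitive_interval' hg left_mem_uIcc) x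
    left_mem_uIcc |>.mono_of_mem_nhdsWithin (by rw [uIcc_of_le hxb.le]; exact Icc_mem_nhdsGT hxb)
  exact hcont.eventually (eventually_lt_nhds (by simpa using hε))

theorem eqOn_zero_of_le_integral_mul {g φ : ℝ → ℝ} {a b : ℝ} (hab : a ≤ b)
    (hg : IntegrableOn g (Icc a b)) (hg0 : ∀ t ∈ Icc a b, 0 ≤ g t)
    (hφc : ContinuousOn φ (Icc a b)) (hφ0 : ∀ t ∈ Icc a b, 0 ≤ φ t)
    (hφ : ∀ t ∈ Icc a b, φ t ≤ ∫ s in a..t, g s * φ s) : EqOn φ 0 (Icc a b) := by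
  have hgI : ∀ c ∈ Icc a b, ∀ d ∈ Icc a b, IntervalIntegrable g volume c d := fun c hc d hd =>
    (hg.mono_set (uIcc_subset_Icc hc hd)).intervalIntegrable
  have hgφI : ∀ c ∈ Icc a b, ∀ d ∈ Icc a b, IntervalIntegrable (fun s => g s * φ s) volume c d :=
    fun c hc d hd => (hgI c hc d hd).mul_continuousOn (hφc.mono (uIcc_subset_Icc hc hd))
  have hgφ0 : ∀ c ∈ Icc a b, 0 ≤ᵐ[volume.restrict (Ioc a c)] fun s => g s * φ s := fun c hc =>
    (ae_restrict_mem measurableSet_Ioc).mono fun s hs =>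
      have hsI : s ∈ Icc a b := ⟨hs.1.le, hs.2.trans hc.2⟩
      mul_nonneg (hg0 s hsI) (hφ0 s hsI)
  set Φ : ℝ → ℝ := fun t => ∫ s in a..t, g s * φ s
  have ha : a ∈ Icc a b := left_mem_Icc.2 hab
  have hΦ_mono : MonotoneOn Φ (Icc a b) := fun s hs t ht hst =>
    intervalIntegral.integral_mono_interval le_rfl hs.1 hst (hgφ0 t ht) (hgφI a ha t ht)
  have hΦ_closed : IsClosed (Φ ⁻¹' {0} ∩ Icc a b) := by
    rw [inter_comm]
    exact (intervalIntegral.continuousOn_primitive_interval'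
      (hgφI a ha b (right_mem_Icc.2 hab)) left_mem_uIcc).mono (by rw [uIcc_of_le hab])
      |>.preimage_isClosed_of_isClosed isClosed_Icc isClosed_singleton
  have hΦ_zero : Icc a b ⊆ Φ ⁻¹' {0} := by
    refine hΦ_closed.Icc_subset_of_forall_mem_nhdsWithin (by simp [Φ]) fun x ⟨hΦx, hx⟩ => ?_
    have hxI : x ∈ Icc a b := Ico_subset_Icc_self hx
    -- just right of `x` the kernel has mass `< 1/2`, and there `Φ t ≤ Φ t / 2`
    filter_upwards [Ioo_mem_nhdsGT hx.2, (hgI x hxI b (right_mem_Icc.2 hab)).eventually_integral_lt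
      hx.2 one_half_pos] with t ht hGt
    have htI : t ∈ Icc a b := ⟨hxI.1.trans ht.1.le, ht.2.le⟩
    have hΦx : Φ x = 0 := hΦx
    have hΦt_nonneg : 0 ≤ Φ t := hΦx ▸ hΦ_mono hxI htI ht.1.le
    have hΦt : Φ t ≤ (∫ u in x..t, g u) * Φ t :=
      calc Φ t = ∫ u in x..t, g u * φ u := by
            rw [← intervalIntegral.integral_interval_sub_left (hgφI a ha t htI)
              (hgφI a ha x hxI)]
            exact (sub_eq_self.2 hΦx).symm
        _ ≤ ∫ u in x..t, g u * Φ t :=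
          intervalIntegral.integral_mono_on ht.1.le (hgφI x hxI t htI)
            ((hgI x hxI t htI).mul_const _) fun u hu =>
            have huI : u ∈ Icc a b := ⟨hxI.1.trans hu.1, hu.2.trans htI.2⟩
            mul_le_mul_of_nonneg_left ((hφ u huI).trans (hΦ_mono huI htI hu.2)) (hg0 u huI)
        _ = (∫ u in x..t, g u) * Φ t := intervalIntegral.integral_mul_const _ _
    show Φ t = 0
    nlinarith
  intro t ht
  exact le_antisymm ((hφ t ht).trans_eq (hΦ_zero ht)) (hφ0 t ht)

theorem LocIntOn.intervalIntegrable {a : ℝ → ℝ} (ha : LocIntOn a) {t : ℝ} (ht : 0 ≤ t) :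
    IntervalIntegrable a volume 0 t :=
  (intervalIntegrable_iff_integrableOn_Icc_of_le ht).2 (ha t ht)

theorem LocIntOn.continuousOn_primitive {a : ℝ → ℝ} (ha : LocIntOn a) {t : ℝ} (ht : 0 ≤ t) :
    ContinuousOn (fun s => ∫ u in (0:ℝ)..s, a u) (Icc 0 t) := by
  simpa [uIcc_of_le ht] using
    intervalIntegral.continuousOn_primitive_interval' (ha.intervalIntegrable ht) left_mem_uIcc

namespace IsSol

variable {a : ℝ → ℝ} {y₀ : ℝ} {y : ℝ → ℝ}

theorem initial_nonneg (hy : IsSol a y₀ y) : 0 ≤ y₀ := by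
  simpa [hy.2.2 0 le_rfl] using hy.2.1 0 le_rfl

theorem continuousOn_sqrt (hy : IsSol a y₀ y) {t : ℝ} :
    ContinuousOn (fun s => √(y s)) (Icc 0 t) :=
  (hy.1.mono Icc_subset_Ici_self).sqrt

theorem sub_sq_eq_integral (ha : LocIntOn a) (hy : IsSol a y₀ y) {t : ℝ} (ht : 0 ≤ t) :
    y t - (√y₀ - ∫ s in (0:ℝ)..t, a s) ^ 2
      = -2 * ∫ s in (0:ℝ)..t, a s * (√(y s) - (√y₀ - ∫ u in (0:ℝ)..s, a u)) := by
  have haI := ha.intervalIntegrable ht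
  have hr : ContinuousOn (fun s => √y₀ - ∫ u in (0:ℝ)..s, a u) (uIcc 0 t) :=
    continuousOn_const.sub (uIcc_of_le ht ▸ ha.continuousOn_primitive ht)
  have hsplit := intervalIntegral.integral_sub
    (haI.mul_continuousOn (uIcc_of_le ht ▸ hy.continuousOn_sqrt)) (haI.mul_continuousOn hr)
  simp only [← mul_sub] at hsplit
  rw [hy.2.2 t ht, sq_sub_integral haI, Real.sq_sqrt hy.initial_nonneg, hsplit]
  ring

theorem sqrt_eq_sub_integral (ha : LocIntOn a) (hy : IsSol a y₀ y) {T : ℝ} (hT : 0 ≤ T)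
    (hr : ∀ t ∈ Icc 0 T, 0 < √y₀ - ∫ s in (0:ℝ)..t, a s) :
    ∀ t ∈ Icc 0 T, √(y t) = √y₀ - ∫ s in (0:ℝ)..t, a s := by
  set r : ℝ → ℝ := fun t => √y₀ - ∫ s in (0:ℝ)..t, a s
  have hrc : ContinuousOn r (Icc 0 T) := continuousOn_const.sub (ha.continuousOn_primitive hT)
  obtain ⟨m, hm, hmin⟩ := isCompact_Icc.exists_isMinOn (nonempty_Icc.2 hT) hrc
  have hrm : 0 < r m := hr m hm
  have hzero : EqOn (fun t => |√(y t) - r t|) 0 (Icc 0 T) := by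
    refine eqOn_zero_of_le_integral_mul hT ((ha T hT).abs.const_mul (2 / r m))
      (fun t _ => by positivity) (hy.continuousOn_sqrt.sub hrc).abs (fun t _ => abs_nonneg _)
      fun t ht => ?_
    have hrt : r m ≤ r t := hmin ht
    have hsum : 0 < √(y t) + r t := by positivity [hr t ht]
    calc |√(y t) - r t| = |√(y t) - r t| * r m / r m := by field_simp
      _ ≤ |√(y t) - r t| * (√(y t) + r t) / r m := by gcongr; linarith [Real.sqrt_nonneg (y t)]
      _ = |y t - r t ^ 2| / r m := by
        rw [← abs_of_pos hsum, ← abs_mul]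
        congr 2
        linear_combination Real.sq_sqrt (hy.2.1 t ht.1)
      _ = 2 / r m * |∫ s in (0:ℝ)..t, a s * (√(y s) - r s)| := by
        rw [hy.sub_sq_eq_integral ha ht.1, abs_mul]; norm_num; ring
      _ ≤ 2 / r m * ∫ s in (0:ℝ)..t, |a s * (√(y s) - r s)| := by
        gcongr; exact intervalIntegral.abs_integral_le_integral_abs ht.1
      _ = ∫ s in (0:ℝ)..t, 2 / r m * |a s| * |√(y s) - r s| := by
        rw [← intervalIntegral.integral_const_mul]; simp only [abs_mul, mul_assoc]
  intro t ht
  simpa [sub_eq_zero] using hzero ht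

end IsSol

theorem stmt10_general (a : ℝ → ℝ) (y₀ K : ℝ) (ha : LocIntOn a) (hK : 0 < K)
    (haK : ∀ᵐ t ∂(MeasureTheory.volume : MeasureTheory.Measure ℝ), 0 ≤ t → a t ≤ K)
    (y : ℝ → ℝ) (hy : IsMaxSol a y₀ y) :
    ∀ t : ℝ, 0 ≤ t → t < Real.sqrt y₀ / K →
      0 < y t ∧ Real.sqrt (y t) = Real.sqrt y₀ - ∫ s in (0:ℝ)..t, a s := by
  intro t ht htK
  have hKt : K * t < √y₀ := by rwa [lt_div_iff₀ hK, mul_comm] at htK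
  have hr : ∀ s ∈ Icc 0 t, 0 < √y₀ - ∫ u in (0:ℝ)..s, a u := fun s hs => by
    have hAs : ∫ u in (0:ℝ)..s, a u ≤ ∫ _ in (0:ℝ)..s, K :=
      intervalIntegral.integral_mono_ae_restrict hs.1 (ha.intervalIntegrable hs.1)
        intervalIntegrable_const <| by
          filter_upwards [ae_restrict_of_ae haK, ae_restrict_mem measurableSet_Icc] with u hu hus
          exact hu hus.1
    rw [intervalIntegral.integral_const, smul_eq_mul, sub_zero] at hAs
    nlinarith [hs.2]
  have hsqrt := hy.1.sqrt_eq_sub_integral ha ht hr t ⟨ht, le_rfl⟩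
  exact ⟨Real.sqrt_pos.1 (hsqrt ▸ hr t ⟨ht, le_rfl⟩), hsqrt⟩

theorem stmt10 (a : ℝ → ℝ) (y₀ K : ℝ) (ha : LocIntOn a) (hy₀ : 0 < y₀) (hK : 0 < K)
    (haK : ∀ᵐ t ∂(MeasureTheory.volume : MeasureTheory.Measure ℝ), 0 ≤ t → a t ≤ K)
    (y : ℝ → ℝ) (hy : IsMaxSol a y₀ y) :
    ∀ t : ℝ, 0 ≤ t → t < Real.sqrt y₀ / K →
      0 < y t ∧ Real.sqrt (y t) = Real.sqrt y₀ - ∫ s in (0:ℝ)..t, a s :=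
  stmt10_general a y₀ K ha hK haK y hy
end
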